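/- If a formal power series p(x) with p(0) = 0 satisfies p(x) = x·exp(p(x)), then its coefficients are given by [x^n] p(x) = n^{n-1}/n! for all n ≥ 1. -/

import Mathlib

open Nat Real Filter

/-- The composition `exp ∘ p` for a power series `p` with zero constant coefficient:
its `n`-th coefficient is `∑_{k ≤ n} [x^n] (p^k) / k!`. -/
noncomputable def expComp (p : PowerSeries ℚ) : PowerSeries ℚ :=
  PowerSeries.mk fun n => ∑ k ∈ Finset.range (n + 1), PowerSeries.coeff n (p ^ k) / k !

/-!
Since `p = X · e^p`, we have `p^k = X^k · e^{kp}`, so `[x^{m+k}] p^k = ∑_j k^j/j! · [x^m] p^j`: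
coefficients of powers of `p` are determined by lower ones. Strong induction on `m` then gives
`(m+k) · [x^{m+k}] p^k = k (m+k)^m / m!`; in the inductive step the sum collapses by the
binomial theorem in the form `∑_{i+j=N} x^i/i! · y^j/j! = (x+y)^N/N!`. The case `k = 1` is the
theorem.
-/

open PowerSeries Finset

section CommRing

variable {R : Type*} [CommRing R] {p : R⟦X⟧}

theorem PowerSeries.coeff_pow_eq_zero_of_lt (hp : constantCoeff p = 0) {n d : ℕ} (h : n < d) :
    coeff n (p ^ d) = 0 :=
  coeff_of_lt_order _ <| (Nat.cast_lt.mpr h).trans_le (le_order_pow_of_constantCoeff_eq_zero d hp)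

theorem PowerSeries.coeff_subst_eq_sum_range (hp : constantCoeff p = 0) (f : R⟦X⟧) (n : ℕ) :
    coeff n (f.subst p) = ∑ d ∈ range (n + 1), coeff d f * coeff n (p ^ d) := by
  rw [coeff_subst' (HasSubst.of_constantCoeff_zero' hp)]
  refine finsum_eq_sum_of_support_subset _ fun d hd => ?_
  by_contra hdn
  simp only [coe_range, Set.mem_Iio, not_lt] at hdn
  exact hd (by simp [coeff_pow_eq_zero_of_lt hp (Nat.lt_of_succ_le hdn)])

end CommRing

theorem sum_antidiagonal_pow_div_factorial {K : Type*} [Field K] [CharZero K] (x y : K) (n : ℕ) :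
    ∑ ij ∈ antidiagonal n, x ^ ij.1 / ij.1 ! * (y ^ ij.2 / ij.2 !) = (x + y) ^ n / n ! := by
  simpa [coeff_mul, coeff_rescale, coeff_exp, div_eq_mul_inv, mul_mul_mul_comm]
    using congrArg (coeff n) (exp_mul_exp_eq_exp_add x y)

theorem expComp_eq_subst {p : ℚ⟦X⟧} (hp : constantCoeff p = 0) :
    expComp p = (exp ℚ).subst p := by
  ext n
  simp [expComp, coeff_subst_eq_sum_range hp, coeff_exp, div_eq_inv_mul]

theorem coeff_expComp_pow {p : ℚ⟦X⟧} (hp : constantCoeff p = 0) (k m : ℕ) :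
    coeff m (expComp p ^ k) = ∑ j ∈ range (m + 1), (k : ℚ) ^ j / j ! * coeff m (p ^ j) := by
  rw [expComp_eq_subst hp, ← subst_pow (HasSubst.of_constantCoeff_zero' hp),
    exp_pow_eq_rescale_exp, coeff_subst_eq_sum_range hp]
  simp [coeff_rescale, coeff_exp, div_eq_mul_inv]

section TreeFunction

variable {p : ℚ⟦X⟧}

theorem coeff_add_pow_of_eq_X_mul_expComp (h : p = X * expComp p) (m k : ℕ) :
    coeff (m + k) (p ^ k) = ∑ j ∈ range (m + 1), (k : ℚ) ^ j / j ! * coeff m (p ^ j) := by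
  have hp : constantCoeff p = 0 := by rw [h]; simp
  conv_lhs => rw [h, mul_pow, coeff_X_pow_mul]
  exact coeff_expComp_pow hp k m

theorem natCast_mul_coeff_pow_of_eq_X_mul_expComp (h : p = X * expComp p) (m k : ℕ) :
    ((m + k : ℕ) : ℚ) * coeff (m + k) (p ^ k) = k * ((m + k : ℕ) : ℚ) ^ m / m ! := by
  induction m using Nat.strong_induction_on generalizing k with
  | _ m ih =>
  rcases m with _ | m
  · rw [coeff_add_pow_of_eq_X_mul_expComp h]
    simp
  have hterm : ∀ i ∈ range (m + 1),
      ((m + 1 : ℕ) : ℚ) * ((k : ℚ) ^ (i + 1) / (i + 1)! * coeff (m + 1) (p ^ (i + 1))) =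
        k * ((k : ℚ) ^ i / i ! * (((m + 1 : ℕ) : ℚ) ^ (m - i) / (m - i)!)) := by
    intro i hi
    have hIH := ih (m - i) (by omega) (i + 1)
    rw [show m - i + (i + 1) = m + 1 by grind] at hIH
    rw [mul_left_comm, hIH, Nat.factorial_succ]
    push_cast
    field_simp
    ring
  have hsum : ((m + 1 : ℕ) : ℚ) * coeff (m + 1 + k) (p ^ k) =
      k * (k + (m + 1 : ℕ)) ^ m / m ! := by
    rw [coeff_add_pow_of_eq_X_mul_expComp h, sum_range_succ', mul_add, mul_sum,
      sum_congr rfl hterm, ← mul_sum, ← Nat.sum_antidiagonal_eq_sum_range_succ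
        (fun i j => (k : ℚ) ^ i / i ! * (((m + 1 : ℕ) : ℚ) ^ j / j !)),
      sum_antidiagonal_pow_div_factorial]
    simp [mul_div_assoc]
  rw [← mul_right_inj' (by positivity : ((m + 1 : ℕ) : ℚ) ≠ 0), mul_left_comm, hsum,
    Nat.factorial_succ]
  push_cast
  field_simp
  ring

end TreeFunction

theorem stmt_4_general (p : PowerSeries ℚ)
    (h : p = PowerSeries.X * expComp p) (n : ℕ) (hn : 1 ≤ n) :
    PowerSeries.coeff n p = (n : ℚ) ^ (n - 1) / n ! := by
  obtain ⟨m, rfl⟩ := Nat.exists_eq_add_of_le' hn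
  have h1 := natCast_mul_coeff_pow_of_eq_X_mul_expComp h m 1
  rw [pow_one] at h1
  rw [Nat.add_sub_cancel, Nat.factorial_succ]
  push_cast at h1 ⊢
  rw [eq_div_iff (by positivity)]
  field_simp at h1
  linear_combination h1

/-- Lagrange inversion for `φ(w) = e^w`: if `p(0) = 0` and `p = X · exp(p)`, then
`[x^n] p = n^(n-1)/n!` for all `n ≥ 1`. -/
theorem stmt_4 (p : PowerSeries ℚ) (h0 : PowerSeries.constantCoeff p = 0)
    (h : p = PowerSeries.X * expComp p) (n : ℕ) (hn : 1 ≤ n) :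
    PowerSeries.coeff n p = (n : ℚ) ^ (n - 1) / n ! :=
  stmt_4_general p h n hn
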